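/- For indices with 1 ≤ i, i+1 ≤ k ≤ j ≤ j′ ≤ n: if d_P(1,i+1) < dist(v_{i+1}, v_j) + d_P(k,j), then d_P(1,i) < dist(v_i, v_{j′}) + d_P(k,j′). Consequently, if j(i) and j(i+1) are indices in [i,n] and [i+1,n] respectively with j(i+1) ≤ j(i), and k(ℓ) denotes the largest k ∈ [ℓ, j(ℓ)] with d_P(1,ℓ) < dist(v_ℓ, v_{j(ℓ)}) + d_P(k, j(ℓ)) (with k(ℓ) = 0 if no such k exists), then k(i+1) ≤ k(i). -/
import Mathlib


/-- Path distance along the path: `d_P(i,j) = Σ_{k=i}^{j-1} dist(v_k, v_{k+1})`. -/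
noncomputable def dP {X : Type*} [MetricSpace X] (v : ℕ → X) (i j : ℕ) : ℝ :=
  ∑ k ∈ Finset.Ico i j, dist (v k) (v (k + 1))

/-- `kl = k(ℓ)` (for the pair `(ℓ, jl)` with `jl = j(ℓ)`): `kl` is the largest
`k ∈ [ℓ, jl]` with `d_P(1,ℓ) < dist(v_ℓ, v_{jl}) + d_P(k, jl)`, with `kl = 0` if
no such `k` exists. -/
def IsLargestK {X : Type*} [MetricSpace X] (v : ℕ → X) (l jl kl : ℕ) : Prop :=
  (kl ∈ Finset.Icc l jl ∧ dP v 1 l < dist (v l) (v jl) + dP v kl jl ∧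
    ∀ k ∈ Finset.Icc l jl, dP v 1 l < dist (v l) (v jl) + dP v k jl → k ≤ kl) ∨
  (kl = 0 ∧ ∀ k ∈ Finset.Icc l jl, ¬ dP v 1 l < dist (v l) (v jl) + dP v k jl)

lemma dP_nonneg {X : Type*} [MetricSpace X] (v : ℕ → X) (a b : ℕ) : 0 ≤ dP v a b :=
  Finset.sum_nonneg fun _ _ => dist_nonneg

lemma dP_add {X : Type*} [MetricSpace X] (v : ℕ → X) {a b c : ℕ} (hab : a ≤ b) (hbc : b ≤ c) :
    dP v a b + dP v b c = dP v a c :=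
  Finset.sum_Ico_consecutive _ hab hbc

lemma dist_le_dP {X : Type*} [MetricSpace X] (v : ℕ → X) {a b : ℕ} (h : a ≤ b) :
    dist (v a) (v b) ≤ dP v a b := by
  induction b, h using Nat.le_induction with
  | base => simp [dP]
  | succ b hab ih =>
    calc dist (v a) (v (b + 1)) ≤ dist (v a) (v b) + dist (v b) (v (b + 1)) := dist_triangle _ _ _
    _ ≤ dP v a b + dist (v b) (v (b + 1)) := by linarith
    _ = dP v a (b + 1) := by
      rw [eq_comm, dP, Finset.sum_Ico_succ_top hab]; rfl

/-- For indices with `1 ≤ i`, `i+1 ≤ k ≤ j ≤ j′ ≤ n`: if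
`d_P(1,i+1) < dist(v_{i+1}, v_j) + d_P(k,j)` then
`d_P(1,i) < dist(v_i, v_{j′}) + d_P(k,j′)`. Consequently, if `j(i) ∈ [i,n]` and
`j(i+1) ∈ [i+1,n]` with `j(i+1) ≤ j(i)`, and `k(ℓ)` denotes the largest
`k ∈ [ℓ, j(ℓ)]` with `d_P(1,ℓ) < dist(v_ℓ, v_{j(ℓ)}) + d_P(k, j(ℓ))` (with
`k(ℓ) = 0` if no such `k` exists), then `k(i+1) ≤ k(i)`. -/
theorem stmt12 {X : Type*} [MetricSpace X] (n : ℕ) (hn : 1 ≤ n) (v : ℕ → X)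
    (hv : Set.InjOn v (Set.Icc 1 n))
    (i : ℕ) (hi : 1 ≤ i) :
    (∀ k j j' : ℕ, i + 1 ≤ k → k ≤ j → j ≤ j' → j' ≤ n →
      dP v 1 (i + 1) < dist (v (i + 1)) (v j) + dP v k j →
      dP v 1 i < dist (v i) (v j') + dP v k j') ∧
    (∀ ji ji1 ki ki1 : ℕ, ji ∈ Finset.Icc i n → ji1 ∈ Finset.Icc (i + 1) n →
      ji1 ≤ ji → IsLargestK v i ji ki → IsLargestK v (i + 1) ji1 ki1 →
      ki1 ≤ ki) := by
  have part1 : ∀ k j j' : ℕ, i + 1 ≤ k → k ≤ j → j ≤ j' → j' ≤ n →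
      dP v 1 (i + 1) < dist (v (i + 1)) (v j) + dP v k j →
      dP v 1 i < dist (v i) (v j') + dP v k j' := by
    intro k j j' hk hkj hjj' hj'n h
    have h1 : dP v 1 i + dist (v i) (v (i + 1)) = dP v 1 (i + 1) := by
      have := dP_add v (a := 1) (b := i) (c := i + 1) hi (Nat.le_succ i)
      rw [← this]
      congr 1
      rw [dP, Finset.sum_Ico_succ_top le_rfl, Finset.Ico_self, Finset.sum_empty, zero_add]
    have h2 : dist (v (i + 1)) (v j) ≤ dist (v (i + 1)) (v i) + dist (v i) (v j) :=
      dist_triangle _ _ _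
    have h3 : dist (v i) (v j) ≤ dist (v i) (v j') + dist (v j') (v j) := dist_triangle _ _ _
    have h4 : dist (v j') (v j) ≤ dP v j j' := by rw [dist_comm]; exact dist_le_dP v hjj'
    have h5 : dP v k j + dP v j j' = dP v k j' := dP_add v hkj hjj'
    have h6 : dist (v (i + 1)) (v i) = dist (v i) (v (i + 1)) := dist_comm _ _
    linarith
  refine ⟨part1, ?_⟩
  intro ji ji1 ki ki1 hji hji1 hle hki hki1
  rcases hki1 with ⟨hmem, hlt, _⟩ | ⟨h0, _⟩
  · simp only [Finset.mem_Icc] at hmem hji hji1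
    have key : dP v 1 i < dist (v i) (v ji) + dP v ki1 ji :=
      part1 ki1 ji1 ji hmem.1 hmem.2 hle hji.2 hlt
    rcases hki with ⟨_, _, hmax⟩ | ⟨_, hnone⟩
    · exact hmax ki1 (Finset.mem_Icc.mpr ⟨le_trans (Nat.le_succ i) hmem.1,
        le_trans hmem.2 hle⟩) key
    · exact absurd key (hnone ki1 (Finset.mem_Icc.mpr ⟨le_trans (Nat.le_succ i) hmem.1,
        le_trans hmem.2 hle⟩))
  · simp [h0]
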